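/- arXiv:2503.17858 — 4 statements merged into one kernel-verified Lean document; each statement's English description precedes it below -/
import Mathlib

section
/- With G_η(s) = π^{1/2-s} i^{η'} Γ((η'+s)/2)/Γ((1+η'-s)/2), η' ∈ {0,1}, η' ≡ η (mod 2): G_η is meromorphic with simple poles exactly at s = -n for n ∈ ℕ₀ with n ≡ η (mod 2), and the residue at s = -n equals 2 (2πi)^n / n!. -/
/-!
The factor `π^(1/2 - s) i^η' / Γ((1 + η' - s)/2)` of `G_η` is entire because `1/Γ` is, so all
poles come from `Γ((η' + s)/2)`. At `s = -n` with `n = 2k + η'` this factor has residue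
`2 (-1)^k / k!`, and Legendre's duplication formula gives
`Γ((1 + η' + n)/2) · k! = Γ((n + 1)/2) Γ((n + 2)/2) = n! √π / 2^n`,
which turns the product into `2 (2πi)^n / n!`.
-/

noncomputable def Gd (η : ℤ) (s : ℂ) : ℂ :=
  ((Real.pi : ℂ) ^ ((1 : ℂ) / 2 - s)) * (if Even η then 1 else Complex.I) *
    Complex.Gamma (((if Even η then (0 : ℂ) else 1) + s) / 2) /
    Complex.Gamma ((1 + (if Even η then (0 : ℂ) else 1) - s) / 2)

open Complex Filter Topology
open scoped Real Nat

namespace Complex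

theorem analyticAt_Gamma {z : ℂ} (hz : ∀ m : ℕ, z ≠ -m) : AnalyticAt ℂ Gamma z := by
  simpa [Pi.inv_def] using
    (differentiable_one_div_Gamma.analyticAt z).inv (by simpa using Gamma_ne_zero hz)

theorem tendsto_add_nat_mul_Gamma_nhdsNE (k : ℕ) :
    Tendsto (fun z ↦ (z + k) * Gamma z) (𝓝[≠] (-k)) (𝓝 ((-1) ^ k / k !)) := by
  induction k with
  | zero => simpa using tendsto_self_mul_Gamma_nhds_zero
  | succ k ih =>
    have hk : (-((k + 1 : ℕ) : ℂ)) ≠ 0 := neg_ne_zero.mpr (Nat.cast_ne_zero.mpr k.succ_ne_zero)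
    have hshift : Tendsto (· + 1) (𝓝[≠] (-((k + 1 : ℕ) : ℂ))) (𝓝[≠] (-(k : ℂ))) := by
      refine ((Homeomorph.addRight (1 : ℂ)).map_punctured_nhds_eq _).trans_le (le_of_eq ?_)
      simp
    have hinv : Tendsto (·⁻¹) (𝓝[≠] (-((k + 1 : ℕ) : ℂ))) (𝓝 (-((k + 1 : ℕ) : ℂ))⁻¹) :=
      (continuousAt_inv₀ hk).tendsto.mono_left nhdsWithin_le_nhds
    have hrec : ∀ᶠ z in 𝓝[≠] (-((k + 1 : ℕ) : ℂ)),
        (z + 1 + k) * Gamma (z + 1) * z⁻¹ = (z + (k + 1 : ℕ)) * Gamma z := by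
      filter_upwards [(eventually_ne_nhds hk).filter_mono nhdsWithin_le_nhds]
        with z (hz : z ≠ 0)
      rw [Gamma_add_one z hz]
      field_simp
      push_cast; ring
    convert ((ih.comp hshift).mul hinv).congr' hrec using 2
    rw [Nat.factorial_succ]
    push_cast
    field_simp
    ring

theorem Gamma_succ_div_two_mul_Gamma_succ_succ_div_two (n : ℕ) :
    Gamma ((n + 1) / 2) * Gamma ((n + 2) / 2) = n ! * √π / 2 ^ n := by
  have h := Gamma_mul_Gamma_add_half ((n + 1) / 2)
  rw [show (n + 1 : ℂ) / 2 + 1 / 2 = (n + 2) / 2 by ring,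
    show 2 * ((n + 1 : ℂ) / 2) = n + 1 by ring, Gamma_nat_eq_factorial, show (1 : ℂ) - (n + 1) = -n by ring, cpow_neg, cpow_natCast] at h
  rw [h]; field_simp

end Complex

theorem eq_two_mul_div_two_add_natMod {η : ℤ} {n : ℕ} (hn : (n : ℤ) % 2 = η % 2) :
    n = 2 * (n / 2) + η.natMod 2 := by
  simp only [Int.natMod]; omega

-- `η.natMod 2` is the paper's `η'`.
noncomputable def GdCofactor (η : ℤ) (s : ℂ) : ℂ :=
  (π : ℂ) ^ ((1 : ℂ) / 2 - s) * I ^ η.natMod 2 / Gamma ((1 + η.natMod 2 - s) / 2)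

theorem Gd_eq_Gamma_mul_GdCofactor (η : ℤ) (s : ℂ) :
    Gd η s = Gamma ((η.natMod 2 + s) / 2) * GdCofactor η s := by
  rcases Int.even_or_odd η with h | h
  · have : η.natMod 2 = 0 := by simp [Int.natMod, Int.even_iff.mp h]
    simp only [Gd, GdCofactor, h, this, ↓reduceIte, Nat.cast_zero, pow_zero]
    ring
  · have : η.natMod 2 = 1 := by simp [Int.natMod, Int.odd_iff.mp h]
    simp only [Gd, GdCofactor, Int.not_even_iff_odd.mpr h, this, ↓reduceIte, Nat.cast_one, pow_one]
    ring

theorem differentiable_GdCofactor (η : ℤ) : Differentiable ℂ (GdCofactor η) := by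
  have h : Differentiable ℂ (fun s ↦ (Gamma ((1 + η.natMod 2 - s) / 2))⁻¹) :=
    differentiable_one_div_Gamma.comp (f := fun s : ℂ ↦ (1 + η.natMod 2 - s) / 2) (by fun_prop)
  have hπ : (π : ℂ) ≠ 0 := ofReal_ne_zero.mpr Real.pi_ne_zero
  unfold GdCofactor
  simp only [div_eq_mul_inv _ (Gamma _)]
  fun_prop (disch := exact Or.inl hπ)

theorem Gd_analyticAt (η : ℤ) (s : ℂ) (hs : ∀ n : ℕ, (n : ℤ) % 2 = η % 2 → s ≠ -n) :
    AnalyticAt ℂ (Gd η) s := by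
  have hΓ : ∀ m : ℕ, (η.natMod 2 + s) / 2 ≠ -m := by
    intro m hm
    refine hs (2 * m + η.natMod 2) ?_ ?_
    · simp only [Int.natMod]; omega
    · push_cast; linear_combination 2 * hm
  have hlin : AnalyticAt ℂ (fun z : ℂ ↦ (η.natMod 2 + z) / 2) s := by fun_prop (disch := norm_num)
  rw [funext (Gd_eq_Gamma_mul_GdCofactor η)]
  exact ((analyticAt_Gamma hΓ).comp (f := fun z : ℂ ↦ (η.natMod 2 + z) / 2) hlin).mul
    ((differentiable_GdCofactor η).analyticAt s)

theorem GdCofactor_neg_nat {η : ℤ} {n : ℕ} (hn : (n : ℤ) % 2 = η % 2) :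
    GdCofactor η (-n) = (2 * π) ^ n * I ^ η.natMod 2 * (n / 2)! / n ! := by
  have hsplit := eq_two_mul_div_two_add_natMod hn
  set e := η.natMod 2 with he
  set k := n / 2
  have hΓ : Gamma ((1 + e + n) / 2) * k ! = n ! * √π / 2 ^ n := by
    rw [← Gamma_succ_div_two_mul_Gamma_succ_succ_div_two, ← Gamma_nat_eq_factorial]
    have : e < 2 := Int.natMod_lt two_ne_zero
    interval_cases e
    · rw [show (k + 1 : ℂ) = (n + 2) / 2 by rw [hsplit]; push_cast; ring]
      ring_nf
    · rw [show (k + 1 : ℂ) = (n + 1) / 2 by rw [hsplit]; push_cast; ring]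
      ring_nf
  have hsqrt : (π : ℂ) ^ ((1 : ℂ) / 2) = √π := by
    rw [Real.sqrt_eq_rpow, ofReal_cpow Real.pi_pos.le]
    push_cast; ring_nf
  have hπ : (π : ℂ) ≠ 0 := ofReal_ne_zero.mpr Real.pi_ne_zero
  have hsqrtπ : (√π : ℂ) ≠ 0 := ofReal_ne_zero.mpr (Real.sqrt_ne_zero'.mpr Real.pi_pos)
  rw [GdCofactor, ← he, sub_neg_eq_add, cpow_add _ _ hπ, hsqrt, cpow_natCast, sub_neg_eq_add,
    eq_div_of_mul_eq (Nat.cast_ne_zero.mpr k.factorial_ne_zero) hΓ]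
  field_simp
  ring

theorem Gd_residue {η : ℤ} {n : ℕ} (hn : (n : ℤ) % 2 = η % 2) :
    Tendsto (fun s ↦ (s + n) * Gd η s) (𝓝[≠] (-n)) (𝓝 (2 * (2 * π * I) ^ n / n !)) := by
  have hsplit := eq_two_mul_div_two_add_natMod hn
  have hval := GdCofactor_neg_nat hn
  set e := η.natMod 2
  set k := n / 2
  have hmap : Tendsto (fun s : ℂ ↦ (e + s) / 2) (𝓝[≠] (-n)) (𝓝[≠] (-k)) := by
    refine (((Homeomorph.addLeft (e : ℂ)).trans (Homeomorph.mulRight₀ (2⁻¹ : ℂ) (by norm_num))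
      ).map_punctured_nhds_eq _).trans_le (le_of_eq (congrArg (𝓝[≠] ·) ?_))
    simp only [Homeomorph.trans_apply, Homeomorph.coe_addLeft, Homeomorph.coe_mulRight₀, hsplit]
    push_cast
    ring
  have hpole : Tendsto (fun s ↦ (s + n) * Gamma ((e + s) / 2)) (𝓝[≠] (-n))
      (𝓝 (2 * ((-1) ^ k / k !))) := by
    refine ((tendsto_add_nat_mul_Gamma_nhdsNE k).comp hmap).const_mul 2 |>.congr fun s ↦ ?_
    simp only [Function.comp_apply]
    rw [hsplit]; push_cast; ring
  have hcof : Tendsto (GdCofactor η) (𝓝[≠] (-n)) (𝓝 (GdCofactor η (-n))) :=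
    (differentiable_GdCofactor η).continuous.continuousAt.tendsto.mono_left nhdsWithin_le_nhds
  convert (hpole.mul hcof).congr fun s ↦ ?_ using 2
  · have hI : I ^ n = (-1) ^ k * I ^ e := by rw [hsplit, pow_add, pow_mul, I_sq]
    have hk : (k ! : ℂ) ≠ 0 := Nat.cast_ne_zero.mpr k.factorial_ne_zero
    rw [hval, mul_pow, hI]
    field_simp
  · rw [Gd_eq_Gamma_mul_GdCofactor]; ring

/-- `G_η` is analytic away from the points `s = -n`, `n ∈ ℕ₀`, `n ≡ η (mod 2)`,
and at each such point it has a simple pole with residue `2 (2πi)^n / n!`. -/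
theorem Gd_poles_and_residues (η : ℤ) :
    (∀ s : ℂ, (∀ n : ℕ, (n : ℤ) % 2 = η % 2 → s ≠ -(n : ℂ)) → AnalyticAt ℂ (Gd η) s) ∧
    (∀ n : ℕ, (n : ℤ) % 2 = η % 2 →
      Filter.Tendsto (fun s : ℂ => (s + (n : ℂ)) * Gd η s)
        (nhdsWithin (-(n : ℂ)) {(-(n : ℂ))}ᶜ)
        (nhds (2 * (2 * (Real.pi : ℂ) * Complex.I) ^ n / (n.factorial : ℂ)))) :=
  ⟨Gd_analyticAt η, fun _ hn ↦ Gd_residue hn⟩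
end

section
/- Let δ₁,δ₂ ∈ ℤ and let s₁,s₂ ∈ ℂ with 0 < Re(s₁), 0 < Re(s₂), and Re(s₁+s₂) < 1. Then ∫_ℝ sgn(x)^{δ₁}|x|^{s₁-1} sgn(1-x)^{δ₂}|1-x|^{s₂-1} dx = B(s₁,s₂) + (-1)^{δ₂} B(1-s₁-s₂, s₂) + (-1)^{δ₁} B(s₁, 1-s₁-s₂), where B is the Euler beta function. -/
/-!
Split `ℝ` at `0` and `1`. On `(0, 1)` the integrand is the Euler beta integrand. On `(1, ∞)` it
is `(-1)^δ₂ x^(s₁-1) (x-1)^(s₂-1)`, and the substitution `x = 1/t` turns this into the beta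
integrand with parameters `(1 - s₁ - s₂, s₂)`. On `(-∞, 0)` it is `(-1)^δ₁ (-x)^(s₁-1) (1-x)^(s₂-1)`,
which the reflection `x ↦ 1 - x` reduces to the previous case with `s₁` and `s₂` exchanged.
-/

/-- The Euler beta function `B(a,b) = Γ(a)Γ(b)/Γ(a+b)`. -/
noncomputable def eulerBeta (a b : ℂ) : ℂ :=
  Complex.Gamma a * Complex.Gamma b / Complex.Gamma (a + b)

open MeasureTheory Set

theorem integral_eq_Iio_add_Ioo_add_Ioi {E : Type*} [NormedAddCommGroup E] [NormedSpace ℝ E]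
    {f : ℝ → E} {a b : ℝ} (hab : a ≤ b) (hlo : IntegrableOn f (Iio a))
    (hmid : IntegrableOn f (Ioo a b)) (hhi : IntegrableOn f (Ioi b)) :
    ∫ x, f x = (∫ x in Iio a, f x) + (∫ x in Ioo a b, f x) + ∫ x in Ioi b, f x := by
  have hmid' : IntegrableOn f (Ioc a b) := hmid.congr_set_ae Ioo_ae_eq_Ioc.symm
  have hup : IntegrableOn f (Ici a) := by
    refine IntegrableOn.congr_set_ae ?_ Ioi_ae_eq_Ici.symm
    rw [← Ioc_union_Ioi_eq_Ioi hab]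
    exact hmid'.union hhi
  rw [← intervalIntegral.integral_Iio_add_Ici hlo hup, integral_Ici_eq_integral_Ioi,
    ← Ioc_union_Ioi_eq_Ioi hab, setIntegral_union Ioc_disjoint_Ioi_same measurableSet_Ioi hmid' hhi,
    integral_Ioc_eq_integral_Ioo, add_assoc]

theorem ofReal_inv_cpow {t : ℝ} (ht : 0 ≤ t) (w : ℂ) :
    ((t⁻¹ : ℝ) : ℂ) ^ w = (t : ℂ) ^ (-w) := by
  have harg : (t : ℂ).arg ≠ Real.pi := by
    rw [Complex.arg_ofReal_of_nonneg ht]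
    exact Real.pi_ne_zero.symm
  rw [Complex.ofReal_inv, Complex.inv_cpow _ _ harg, Complex.cpow_neg]

theorem eulerBeta_comm (a b : ℂ) : eulerBeta a b = eulerBeta b a := by
  rw [eulerBeta, eulerBeta, mul_comm, add_comm]

theorem eulerBeta_eq_betaIntegral {a b : ℂ} (ha : 0 < a.re) (hb : 0 < b.re) :
    eulerBeta a b = Complex.betaIntegral a b := by
  have hΓ : Complex.Gamma (a + b) ≠ 0 :=
    Complex.Gamma_ne_zero_of_re_pos (by rw [Complex.add_re]; positivity)
  rw [eulerBeta, Complex.Gamma_mul_Gamma_eq_betaIntegral ha hb, mul_div_cancel_left₀ _ hΓ]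

theorem inv_image_Ioo_zero_one : (fun t : ℝ ↦ t⁻¹) '' Ioo 0 1 = Ioi 1 := by
  rw [image_inv_eq_inv, inv_Ioo_0_left one_pos, inv_one]

theorem one_sub_image_Ioi_one : (fun y : ℝ ↦ 1 - y) '' Ioi 1 = Iio 0 := by
  rw [image_const_sub_Ioi, sub_self]

theorem abs_deriv_inv_smul_betaIntegrand_Ioi (a b : ℂ) {t : ℝ} (ht : t ∈ Ioo 0 1) :
    |-(t ^ 2)⁻¹| • (((t⁻¹ : ℝ) : ℂ) ^ (a - 1) * (((t⁻¹ : ℝ) : ℂ) - 1) ^ (b - 1)) =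
      (t : ℂ) ^ (1 - a - b - 1) * (1 - (t : ℂ)) ^ (b - 1) := by
  obtain ⟨h0, h1⟩ := ht
  have ht0 : (t : ℂ) ≠ 0 := Complex.ofReal_ne_zero.2 h0.ne'
  have hsub : ((t⁻¹ : ℝ) : ℂ) - 1 = ((1 - t : ℝ) * (t⁻¹ : ℝ) : ℝ) := by
    push_cast; field_simp
  have hjac : ((|-(t ^ 2)⁻¹| : ℝ) : ℂ) = (t : ℂ) ^ (-2 : ℂ) := by
    rw [abs_neg, abs_of_pos (by positivity), Complex.cpow_neg, Complex.cpow_two]; push_cast; rfl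
  rw [Complex.real_smul, hjac, hsub, Complex.ofReal_mul,
    Complex.mul_cpow_ofReal_nonneg (by linarith) (by positivity), ofReal_inv_cpow h0.le,
    ofReal_inv_cpow h0.le,
    show 1 - a - b - 1 = -2 + -(a - 1) + -(b - 1) by ring, Complex.cpow_add _ _ ht0,
    Complex.cpow_add _ _ ht0]
  push_cast
  ring

theorem abs_deriv_one_sub_smul_betaIntegrand_Iio (a b : ℂ) (y : ℝ) :
    |(-1 : ℝ)| • ((-((1 - y : ℝ) : ℂ)) ^ (a - 1) * (1 - ((1 - y : ℝ) : ℂ)) ^ (b - 1)) =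
      (y : ℂ) ^ (b - 1) * ((y : ℂ) - 1) ^ (a - 1) := by
  rw [abs_neg, abs_one, one_smul, mul_comm]
  push_cast
  rw [neg_sub, sub_sub_cancel]

section BetaIntegrals

variable {a b : ℂ}

theorem integrableOn_Ioo_betaIntegrand (ha : 0 < a.re) (hb : 0 < b.re) :
    IntegrableOn (fun t : ℝ ↦ (t : ℂ) ^ (a - 1) * (1 - (t : ℂ)) ^ (b - 1)) (Ioo 0 1) :=
  (intervalIntegrable_iff_integrableOn_Ioo_of_le zero_le_one).1
    (Complex.betaIntegral_convergent ha hb)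

theorem setIntegral_Ioo_betaIntegrand (ha : 0 < a.re) (hb : 0 < b.re) :
    ∫ t in Ioo (0 : ℝ) 1, (t : ℂ) ^ (a - 1) * (1 - (t : ℂ)) ^ (b - 1) = eulerBeta a b := by
  rw [eulerBeta_eq_betaIntegral ha hb, Complex.betaIntegral,
    intervalIntegral.integral_of_le zero_le_one, integral_Ioc_eq_integral_Ioo]

theorem integrableOn_Ioi_one_betaIntegrand (hc : 0 < (1 - a - b).re) (hb : 0 < b.re) :
    IntegrableOn (fun x : ℝ ↦ (x : ℂ) ^ (a - 1) * ((x : ℂ) - 1) ^ (b - 1)) (Ioi 1) := by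
  rw [← inv_image_Ioo_zero_one, integrableOn_image_iff_integrableOn_abs_deriv_smul measurableSet_Ioo
    (fun t ht ↦ (hasDerivAt_inv ht.1.ne').hasDerivWithinAt) inv_injective.injOn]
  exact (integrableOn_Ioo_betaIntegrand hc hb).congr_fun
    (fun t ht ↦ (abs_deriv_inv_smul_betaIntegrand_Ioi a b ht).symm) measurableSet_Ioo

theorem setIntegral_Ioi_one_betaIntegrand (hc : 0 < (1 - a - b).re) (hb : 0 < b.re) :
    ∫ x in Ioi (1 : ℝ), (x : ℂ) ^ (a - 1) * ((x : ℂ) - 1) ^ (b - 1) = eulerBeta (1 - a - b) b := by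
  rw [← inv_image_Ioo_zero_one, integral_image_eq_integral_abs_deriv_smul measurableSet_Ioo
    (fun t ht ↦ (hasDerivAt_inv ht.1.ne').hasDerivWithinAt) inv_injective.injOn,
    setIntegral_congr_fun measurableSet_Ioo
      (fun t ht ↦ abs_deriv_inv_smul_betaIntegrand_Ioi a b ht),
    setIntegral_Ioo_betaIntegrand hc hb]

theorem integrableOn_Iio_zero_betaIntegrand (ha : 0 < a.re) (hc : 0 < (1 - a - b).re) :
    IntegrableOn (fun x : ℝ ↦ (-(x : ℂ)) ^ (a - 1) * (1 - (x : ℂ)) ^ (b - 1)) (Iio 0) := by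
  rw [← one_sub_image_Ioi_one, integrableOn_image_iff_integrableOn_abs_deriv_smul measurableSet_Ioi
    (fun y _ ↦ ((hasDerivAt_id' y).const_sub 1).hasDerivWithinAt) (sub_right_injective.injOn)]
  refine (integrableOn_Ioi_one_betaIntegrand (by rwa [sub_right_comm]) ha).congr_fun
    (fun y _ ↦ (abs_deriv_one_sub_smul_betaIntegrand_Iio a b y).symm) measurableSet_Ioi

theorem setIntegral_Iio_zero_betaIntegrand (ha : 0 < a.re) (hc : 0 < (1 - a - b).re) :
    ∫ x in Iio (0 : ℝ), (-(x : ℂ)) ^ (a - 1) * (1 - (x : ℂ)) ^ (b - 1) =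
      eulerBeta a (1 - a - b) := by
  rw [← one_sub_image_Ioi_one, integral_image_eq_integral_abs_deriv_smul measurableSet_Ioi
    (fun y _ ↦ ((hasDerivAt_id' y).const_sub 1).hasDerivWithinAt) (sub_right_injective.injOn),
    setIntegral_congr_fun measurableSet_Ioi
      (fun y _ ↦ abs_deriv_one_sub_smul_betaIntegrand_Iio a b y),
    setIntegral_Ioi_one_betaIntegrand (by rwa [sub_right_comm]) ha, eulerBeta_comm, sub_right_comm]

end BetaIntegrals

section SignedIntegrand

variable (δ₁ δ₂ : ℤ) (s₁ s₂ : ℂ)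

noncomputable def signedBetaIntegrand (x : ℝ) : ℂ :=
  (Real.sign x : ℂ) ^ δ₁ * ((|x| : ℝ) : ℂ) ^ (s₁ - 1) *
    ((Real.sign (1 - x) : ℂ) ^ δ₂ * ((|1 - x| : ℝ) : ℂ) ^ (s₂ - 1))

theorem signedBetaIntegrand_eqOn_Iio :
    EqOn (signedBetaIntegrand δ₁ δ₂ s₁ s₂)
      (fun x ↦ (-1) ^ δ₁ * ((-(x : ℂ)) ^ (s₁ - 1) * (1 - (x : ℂ)) ^ (s₂ - 1))) (Iio 0) := by
  intro x (hx : x < 0)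
  rw [signedBetaIntegrand, Real.sign_of_neg hx, Real.sign_of_pos (by linarith),
    abs_of_neg hx, abs_of_pos (by linarith)]
  push_cast [one_zpow]
  ring

theorem signedBetaIntegrand_eqOn_Ioo :
    EqOn (signedBetaIntegrand δ₁ δ₂ s₁ s₂)
      (fun x ↦ (x : ℂ) ^ (s₁ - 1) * (1 - (x : ℂ)) ^ (s₂ - 1)) (Ioo 0 1) := by
  rintro x ⟨hx0, hx1⟩
  rw [signedBetaIntegrand, Real.sign_of_pos hx0, Real.sign_of_pos (by linarith),
    abs_of_pos hx0, abs_of_pos (by linarith)]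
  push_cast [one_zpow]
  ring

theorem signedBetaIntegrand_eqOn_Ioi :
    EqOn (signedBetaIntegrand δ₁ δ₂ s₁ s₂)
      (fun x ↦ (-1) ^ δ₂ * ((x : ℂ) ^ (s₁ - 1) * ((x : ℂ) - 1) ^ (s₂ - 1))) (Ioi 1) := by
  intro x (hx : 1 < x)
  rw [signedBetaIntegrand, Real.sign_of_pos (by linarith), Real.sign_of_neg (by linarith),
    abs_of_pos (by linarith), abs_of_neg (by linarith), neg_sub]
  push_cast [one_zpow]
  ring

end SignedIntegrand

/-- The signed beta integral over all of `ℝ`: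
`∫_ℝ sgn(x)^{δ₁}|x|^{s₁-1} sgn(1-x)^{δ₂}|1-x|^{s₂-1} dx
  = B(s₁,s₂) + (-1)^{δ₂} B(1-s₁-s₂,s₂) + (-1)^{δ₁} B(s₁,1-s₁-s₂)`. -/
theorem signed_beta_integral (δ₁ δ₂ : ℤ) (s₁ s₂ : ℂ)
    (h₁ : 0 < s₁.re) (h₂ : 0 < s₂.re) (h₃ : (s₁ + s₂).re < 1) :
    ∫ x : ℝ,
        ((Real.sign x : ℂ) ^ δ₁ * ((|x| : ℝ) : ℂ) ^ (s₁ - 1) *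
          ((Real.sign (1 - x) : ℂ) ^ δ₂ * ((|1 - x| : ℝ) : ℂ) ^ (s₂ - 1))) =
      eulerBeta s₁ s₂ + (-1 : ℂ) ^ δ₂ * eulerBeta (1 - s₁ - s₂) s₂ +
        (-1 : ℂ) ^ δ₁ * eulerBeta s₁ (1 - s₁ - s₂) := by
  have h₃' : 0 < (1 - s₁ - s₂).re := by
    rw [Complex.add_re] at h₃
    rw [Complex.sub_re, Complex.sub_re, Complex.one_re]
    linarith
  have hlo := signedBetaIntegrand_eqOn_Iio δ₁ δ₂ s₁ s₂
  have hmid := signedBetaIntegrand_eqOn_Ioo δ₁ δ₂ s₁ s₂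
  have hhi := signedBetaIntegrand_eqOn_Ioi δ₁ δ₂ s₁ s₂
  change ∫ x, signedBetaIntegrand δ₁ δ₂ s₁ s₂ x = _
  rw [integral_eq_Iio_add_Ioo_add_Ioi zero_le_one
      (IntegrableOn.congr_fun ((integrableOn_Iio_zero_betaIntegrand h₁ h₃').const_mul _) hlo.symm
        measurableSet_Iio)
      ((integrableOn_Ioo_betaIntegrand h₁ h₂).congr_fun hmid.symm measurableSet_Ioo)
      (IntegrableOn.congr_fun ((integrableOn_Ioi_one_betaIntegrand h₃' h₂).const_mul _) hhi.symm
        measurableSet_Ioi),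
    setIntegral_congr_fun measurableSet_Iio hlo, setIntegral_congr_fun measurableSet_Ioo hmid,
    setIntegral_congr_fun measurableSet_Ioi hhi, integral_const_mul, integral_const_mul,
    setIntegral_Iio_zero_betaIntegrand h₁ h₃', setIntegral_Ioo_betaIntegrand h₁ h₂,
    setIntegral_Ioi_one_betaIntegrand h₃' h₂]
  ring
end

section
/- Gauss's summation: for a₁,a₂,b₁ ∈ ℂ with Re(b₁-a₁-a₂) > 0 and b₁ not a nonpositive integer, the regularized hypergeometric series ₂F₁*(a₁,a₂;b₁;1) := Σ_{n≥0} (a₁)_n (a₂)_n / (n! Γ(b₁+n)) equals Γ(b₁-a₁-a₂) / (Γ(b₁-a₁) Γ(b₁-a₂)). -/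
/-- The rising Pochhammer symbol `(a)_n = a(a+1)⋯(a+n-1)`. -/
noncomputable def poch (a : ℂ) (n : ℕ) : ℂ := ∏ k ∈ Finset.range n, (a + (k : ℂ))

/-!
Write `F(c) = Σ (a)ₙ (b)ₙ / (n! Γ(c+n))`. Euler's limit formula
`Γ(z) = lim Nᶻ N! / (z)_{N+1}` turns ratios of Pochhammer symbols into ratios of Gamma values
up to a power of `N`; in particular the `n`-th term of `F(c)` behaves like
`n^(a+b-c-1) / (Γ(a) Γ(b))`, so the series converges and `n` times its `n`-th term tends to `0`.
Summing the termwise identity behind the contiguous relation then telescopes to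
`(c-a-b) F(c) = (c-a)(c-b) F(c+1)`, and iterating, `(c-a-b)_N F(c) = (c-a)_N (c-b)_N F(c+N)`.
Finally `Γ(c+N) F(c+N) → 1` by dominated convergence, while
`(c-a)_N (c-b)_N / ((c-a-b)_N (c)_N) → Γ(c-a-b) Γ(c) / (Γ(c-a) Γ(c-b))` by Euler's formula again.
-/

open Filter Topology Asymptotics Finset Complex
open scoped Nat

lemma ne_neg_natCast_of_re_pos {z : ℂ} (hz : 0 < z.re) (m : ℕ) : z ≠ -m := by
  rintro rfl
  simp at hz
  linarith [(m.cast_nonneg : (0 : ℝ) ≤ m)]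

lemma add_natCast_ne_neg_natCast {z : ℂ} (hz : ∀ m : ℕ, z ≠ -m) (n : ℕ) :
    ∀ m : ℕ, z + n ≠ -m := fun m h => hz (n + m) (by push_cast; linear_combination h)

lemma add_natCast_ne_zero {z : ℂ} (hz : ∀ m : ℕ, z ≠ -m) (n : ℕ) : z + n ≠ 0 := by
  simpa using add_natCast_ne_neg_natCast hz n 0

lemma re_add_natCast_sub_sub_pos {a b c : ℂ} (h : 0 < (c - a - b).re) (N : ℕ) :
    0 < (c + N - a - b).re := by
  simp only [sub_re, add_re, natCast_re] at h ⊢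
  linarith [(N.cast_nonneg : (0 : ℝ) ≤ N)]

lemma norm_ofReal_add_natCast {r : ℝ} (hr : 0 ≤ r) (k : ℕ) : ‖(r : ℂ) + k‖ = r + k := by
  rw [← ofReal_natCast, ← ofReal_add, Complex.norm_of_nonneg (by positivity)]

lemma poch_zero (z : ℂ) : poch z 0 = 1 := prod_range_zero _

lemma poch_succ (z : ℂ) (n : ℕ) : poch z (n + 1) = poch z n * (z + n) := prod_range_succ _ _

lemma poch_one (n : ℕ) : poch 1 n = n ! := by
  induction n with
  | zero => rw [poch_zero, Nat.factorial_zero, Nat.cast_one]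
  | succ n ih => rw [poch_succ, ih, Nat.factorial_succ]; push_cast; ring

lemma poch_ne_zero {z : ℂ} (hz : ∀ m : ℕ, z ≠ -m) (n : ℕ) : poch z n ≠ 0 :=
  prod_ne_zero_iff.2 fun k _ h => hz k (eq_neg_of_add_eq_zero_left h)

lemma poch_eq_zero {z : ℂ} {m n : ℕ} (hz : z = -m) (hmn : m < n) : poch z n = 0 :=
  prod_eq_zero (mem_range.2 hmn) (by rw [hz]; ring)

lemma norm_poch_le_norm_poch {z w : ℂ} (h : ∀ k : ℕ, ‖z + k‖ ≤ ‖w + k‖) (n : ℕ) :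
    ‖poch z n‖ ≤ ‖poch w n‖ := by
  simp only [poch, norm_prod]
  exact prod_le_prod (fun _ _ => norm_nonneg _) fun k _ => h k

lemma tendsto_inv_poch_add_natCast (z : ℂ) {n : ℕ} (hn : n ≠ 0) :
    Tendsto (fun N : ℕ => (poch (z + N) n)⁻¹) atTop (𝓝 0) := by
  have hfactor : ∀ k ∈ range n, Tendsto (fun N : ℕ => (z + N + k)⁻¹) atTop (𝓝 0) :=
    fun k _ => tendsto_inv₀_cobounded.comp <| (tendsto_add_const_cobounded (k : ℂ)).comp
      ((tendsto_const_add_cobounded z).comp tendsto_natCast_atTop_cobounded)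
  simpa [poch, prod_inv_distrib, prod_eq_zero (mem_range.2 (Nat.pos_of_ne_zero hn))] using
    tendsto_finsetProd (range n) hfactor

lemma Gamma_add_nat {z : ℂ} (hz : ∀ m : ℕ, z ≠ -m) (n : ℕ) :
    Gamma (z + n) = Gamma z * poch z n := by
  induction n with
  | zero => simp [poch_zero]
  | succ n ih =>
    rw [Nat.cast_succ, ← add_assoc, Gamma_add_one _ (add_natCast_ne_zero hz n), ih, poch_succ]
    ring

lemma GammaSeq_eq_poch (z : ℂ) (n : ℕ) :
    GammaSeq z n = (n : ℂ) ^ z * n ! / poch z (n + 1) := rfl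

section PochRatio

variable {x y u v : ℂ}

lemma cpow_mul_poch_ratio_eq_GammaSeq (hx : ∀ m : ℕ, x ≠ -m) (hy : ∀ m : ℕ, y ≠ -m)
    (hu : ∀ m : ℕ, u ≠ -m) (hv : ∀ m : ℕ, v ≠ -m) {N : ℕ} (hN : N ≠ 0) :
    (N : ℂ) ^ (u + v - x - y) *
        (poch x (N + 1) * poch y (N + 1) / (poch u (N + 1) * poch v (N + 1))) =
      GammaSeq u N * GammaSeq v N / (GammaSeq x N * GammaSeq y N) := by
  have hN' : (N : ℂ) ≠ 0 := Nat.cast_ne_zero.2 hN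
  have hpow : ∀ z : ℂ, (N : ℂ) ^ z ≠ 0 := fun z => cpow_ne_zero_iff.2 (Or.inl hN')
  have hexp : (N : ℂ) ^ (u + v - x - y) * (N : ℂ) ^ x * (N : ℂ) ^ y =
      (N : ℂ) ^ u * (N : ℂ) ^ v := by
    rw [← cpow_add _ _ hN', ← cpow_add _ _ hN', ← cpow_add _ _ hN']
    ring_nf
  have hf : ((N ! : ℕ) : ℂ) ≠ 0 := Nat.cast_ne_zero.2 N.factorial_ne_zero
  have := poch_ne_zero hx (N + 1)
  have := poch_ne_zero hy (N + 1)
  have := poch_ne_zero hu (N + 1)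
  have := poch_ne_zero hv (N + 1)
  simp only [GammaSeq_eq_poch]
  field_simp [hpow x, hpow y]
  linear_combination hexp

lemma tendsto_cpow_mul_poch_ratio (hu : ∀ m : ℕ, u ≠ -m) (hv : ∀ m : ℕ, v ≠ -m) :
    Tendsto (fun N : ℕ => (N : ℂ) ^ (u + v - x - y) *
        (poch x (N + 1) * poch y (N + 1) / (poch u (N + 1) * poch v (N + 1)))) atTop
      (𝓝 (Gamma u * Gamma v / (Gamma x * Gamma y))) := by
  by_cases hxy : Gamma x * Gamma y = 0
  -- Mathlib's `Γ` vanishes at its poles, and there a Pochhammer symbol of the numerator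
  -- vanishes eventually.
  · obtain ⟨m, hm⟩ | ⟨m, hm⟩ :=
      (mul_eq_zero.1 hxy).imp (Gamma_eq_zero_iff x).1 (Gamma_eq_zero_iff y).1
    all_goals
      rw [hxy, div_zero]
      refine tendsto_const_nhds.congr' ((eventually_ge_atTop m).mono fun N hN => ?_)
      simp [poch_eq_zero hm (Nat.lt_succ_of_le hN)]
  · have hx : ∀ m : ℕ, x ≠ -m :=
      not_exists.1 <| (Gamma_eq_zero_iff x).not.1 (left_ne_zero_of_mul hxy)
    have hy : ∀ m : ℕ, y ≠ -m :=
      not_exists.1 <| (Gamma_eq_zero_iff y).not.1 (right_ne_zero_of_mul hxy)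
    refine (((GammaSeq_tendsto_Gamma u).mul (GammaSeq_tendsto_Gamma v)).div
      ((GammaSeq_tendsto_Gamma x).mul (GammaSeq_tendsto_Gamma y)) hxy).congr' ?_
    filter_upwards [eventually_ne_atTop 0] with N hN
    exact (cpow_mul_poch_ratio_eq_GammaSeq hx hy hu hv hN).symm

lemma tendsto_poch_ratio_of_add_eq (hxy : x + y = u + v) (hu : ∀ m : ℕ, u ≠ -m)
    (hv : ∀ m : ℕ, v ≠ -m) :
    Tendsto (fun N : ℕ => poch x N * poch y N / (poch u N * poch v N)) atTop
      (𝓝 (Gamma u * Gamma v / (Gamma x * Gamma y))) := by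
  rw [← tendsto_add_atTop_iff_nat 1]
  simpa [show u + v - x - y = 0 by linear_combination -hxy] using
    tendsto_cpow_mul_poch_ratio (x := x) (y := y) hu hv

end PochRatio

section Decay

variable {f : ℕ → ℂ} {s L : ℂ}

lemma summable_norm_of_tendsto_cpow_mul (hs : 0 < s.re)
    (hf : Tendsto (fun N : ℕ => (N : ℂ) ^ (1 + s) * f N) atTop (𝓝 L)) :
    Summable fun N => ‖f N‖ := by
  have hO : f =O[atTop] fun N : ℕ => 1 / (N : ℂ) ^ (1 + s) := by
    refine ((isBigO_refl (fun N : ℕ => 1 / (N : ℂ) ^ (1 + s)) atTop).mul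
      (hf.isBigO_one ℂ)).congr' ?_ (.of_forall fun N => mul_one _)
    filter_upwards [eventually_ne_atTop 0] with N hN
    have : (N : ℂ) ^ (1 + s) ≠ 0 := cpow_ne_zero_iff.2 (Or.inl (Nat.cast_ne_zero.2 hN))
    field_simp
  exact summable_of_isBigO_nat' (summable_one_div_nat_cpow.2 (by simpa using hs)) hO.norm_left

lemma tendsto_mul_of_tendsto_cpow_mul (hs : 0 < s.re)
    (hf : Tendsto (fun N : ℕ => (N : ℂ) ^ (1 + s) * f N) atTop (𝓝 L)) :
    Tendsto (fun N : ℕ => (N : ℂ) * f N) atTop (𝓝 0) := by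
  have hpow : Tendsto (fun N : ℕ => (N : ℂ) ^ (-s)) atTop (𝓝 0) := by
    rw [tendsto_zero_iff_norm_tendsto_zero]
    refine ((tendsto_rpow_neg_atTop hs).comp tendsto_natCast_atTop_atTop).congr' ?_
    filter_upwards [eventually_gt_atTop 0] with N hN
    simp [norm_natCast_cpow_of_pos hN]
  rw [← zero_mul L]
  refine (hpow.mul hf).congr' ?_
  filter_upwards [eventually_ne_atTop 0] with N hN
  rw [← mul_assoc, ← cpow_add _ _ (Nat.cast_ne_zero.2 hN), neg_add_cancel_comm_assoc, cpow_one]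

end Decay

noncomputable def gaussTerm (a b c : ℂ) (n : ℕ) : ℂ :=
  poch a n * poch b n / ((n ! : ℂ) * Gamma (c + n))

section GaussTerm

variable {a b c : ℂ}

lemma Gamma_mul_gaussTerm (hc : ∀ m : ℕ, c ≠ -m) (n : ℕ) :
    Gamma c * gaussTerm a b c n = poch a n * poch b n / (poch 1 n * poch c n) := by
  have := Gamma_ne_zero hc
  have := poch_ne_zero hc n
  rw [gaussTerm, Gamma_add_nat hc, poch_one]
  field_simp

lemma tendsto_cpow_mul_gaussTerm (hc : ∀ m : ℕ, c ≠ -m) :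
    Tendsto (fun N : ℕ => (N : ℂ) ^ (1 + (c - a - b)) * gaussTerm a b c (N + 1)) atTop
      (𝓝 (Gamma a * Gamma b)⁻¹) := by
  have h := (tendsto_cpow_mul_poch_ratio (x := a) (y := b)
    (ne_neg_natCast_of_re_pos (z := 1) (by norm_num)) hc).div_const (Gamma c)
  rw [Gamma_one, one_mul, div_div_cancel_left' (Gamma_ne_zero hc)] at h
  refine h.congr fun N => ?_
  have := Gamma_ne_zero hc
  rw [← Gamma_mul_gaussTerm hc, add_sub_assoc', add_sub_assoc']
  field_simp

lemma summable_norm_gaussTerm (hc : ∀ m : ℕ, c ≠ -m) (h : 0 < (c - a - b).re) :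
    Summable fun n => ‖gaussTerm a b c n‖ :=
  (summable_nat_add_iff 1).1 <|
    summable_norm_of_tendsto_cpow_mul h (tendsto_cpow_mul_gaussTerm hc)

lemma tendsto_natCast_mul_gaussTerm (hc : ∀ m : ℕ, c ≠ -m) (h : 0 < (c - a - b).re) :
    Tendsto (fun n : ℕ => n * gaussTerm a b c n) atTop (𝓝 0) := by
  have hasymp := tendsto_cpow_mul_gaussTerm (a := a) (b := b) hc
  rw [← tendsto_add_atTop_iff_nat 1, ← add_zero 0]
  refine ((tendsto_mul_of_tendsto_cpow_mul h hasymp).add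
    (summable_norm_of_tendsto_cpow_mul h hasymp).of_norm.tendsto_atTop_zero).congr fun N => ?_
  push_cast
  ring

lemma gaussTerm_succ (hc : ∀ m : ℕ, c ≠ -m) (n : ℕ) :
    gaussTerm a b c (n + 1) * ((n + 1) * (c + n)) =
      gaussTerm a b c n * ((a + n) * (b + n)) := by
  have := add_natCast_ne_zero hc n
  have := Gamma_ne_zero (add_natCast_ne_neg_natCast hc n)
  rw [gaussTerm, gaussTerm, poch_succ, poch_succ, Nat.factorial_succ, Nat.cast_succ, ← add_assoc,
    Gamma_add_one _ (add_natCast_ne_zero hc n)]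
  push_cast
  field_simp

lemma gaussTerm_add_one (hc : ∀ m : ℕ, c ≠ -m) (n : ℕ) :
    gaussTerm a b (c + 1) n * (c + n) = gaussTerm a b c n := by
  have := add_natCast_ne_zero hc n
  have := Gamma_ne_zero (add_natCast_ne_neg_natCast hc n)
  rw [gaussTerm, gaussTerm, add_right_comm, Gamma_add_one _ (add_natCast_ne_zero hc n)]
  field_simp

lemma gaussTerm_contiguous (hc : ∀ m : ℕ, c ≠ -m) (n : ℕ) :
    (c - a - b) * gaussTerm a b c n - (c - a) * (c - b) * gaussTerm a b (c + 1) n =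
      n * gaussTerm a b c n - (n + 1 : ℕ) * gaussTerm a b c (n + 1) := by
  refine mul_right_cancel₀ (add_natCast_ne_zero hc n) ?_
  push_cast
  linear_combination gaussTerm_succ (a := a) (b := b) hc n -
    (c - a) * (c - b) * gaussTerm_add_one (a := a) (b := b) hc n

lemma tsum_gaussTerm_contiguous (hc : ∀ m : ℕ, c ≠ -m) (h : 0 < (c - a - b).re) :
    (c - a - b) * ∑' n, gaussTerm a b c n =
      (c - a) * (c - b) * ∑' n, gaussTerm a b (c + 1) n := by
  have hc₁ : ∀ m : ℕ, c + 1 ≠ -m := by simpa using add_natCast_ne_neg_natCast hc 1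
  have h₁ : 0 < (c + 1 - a - b).re := by simpa using re_add_natCast_sub_sub_pos h 1
  have hsum := (((summable_norm_gaussTerm hc h).of_norm.hasSum.mul_left (c - a - b)).sub
    ((summable_norm_gaussTerm hc₁ h₁).of_norm.hasSum.mul_left ((c - a) * (c - b))))
    |>.tendsto_sum_nat
  simp_rw [gaussTerm_contiguous hc, sum_range_sub' (fun n : ℕ => (n : ℂ) * gaussTerm a b c n),
    Nat.cast_zero, zero_mul, zero_sub] at hsum
  exact sub_eq_zero.1 <|
    tendsto_nhds_unique hsum (by simpa using (tendsto_natCast_mul_gaussTerm hc h).neg)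

lemma poch_mul_tsum_gaussTerm (hc : ∀ m : ℕ, c ≠ -m) (h : 0 < (c - a - b).re) (N : ℕ) :
    poch (c - a - b) N * ∑' n, gaussTerm a b c n =
      poch (c - a) N * poch (c - b) N * ∑' n, gaussTerm a b (c + N) n := by
  induction N with
  | zero => simp [poch_zero]
  | succ N ih =>
    have hcont := tsum_gaussTerm_contiguous (add_natCast_ne_neg_natCast hc N)
      (re_add_natCast_sub_sub_pos h N)
    rw [poch_succ, poch_succ, poch_succ, Nat.cast_succ, ← add_assoc]
    linear_combination (c - a - b + N) * ih + poch (c - a) N * poch (c - b) N * hcont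

end GaussTerm

lemma norm_poch_ratio_le (a b : ℂ) {d : ℂ} {x : ℝ} (hx : 0 < x)
    (hd : ∀ k : ℕ, x + k ≤ ‖d + k‖) (n : ℕ) :
    ‖poch a n * poch b n / (poch 1 n * poch d n)‖ ≤
      ‖poch ‖a‖ n * poch ‖b‖ n / (poch 1 n * poch x n)‖ := by
  have hnorm : ∀ z : ℂ, ∀ k : ℕ, ‖z + k‖ ≤ ‖(‖z‖ : ℂ) + k‖ := fun z k => by
    rw [norm_ofReal_add_natCast (norm_nonneg z)]
    simpa using norm_add_le z k
  have hpos : ∀ {r : ℝ}, 0 < r → 0 < ‖poch r n‖ := fun hr =>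
    norm_pos_iff.2 (poch_ne_zero (ne_neg_natCast_of_re_pos (by simpa)) n)
  simp only [norm_div, norm_mul]
  gcongr
  · exact mul_pos (by simpa using hpos one_pos) (hpos hx)
  · exact norm_poch_le_norm_poch (hnorm a) n
  · exact norm_poch_le_norm_poch (hnorm b) n
  · exact norm_poch_le_norm_poch (fun k => (norm_ofReal_add_natCast hx.le k).trans_le (hd k)) n

lemma tendsto_Gamma_mul_tsum_gaussTerm_add_natCast (a b : ℂ) {c : ℂ} (hc : ∀ m : ℕ, c ≠ -m) :
    Tendsto (fun N : ℕ => Gamma (c + N) * ∑' n, gaussTerm a b (c + N) n) atTop (𝓝 1) := by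
  set x : ℝ := ‖a‖ + ‖b‖ + 1
  have hx : 0 < x := by positivity
  have hbound : Summable fun n => ‖poch ‖a‖ n * poch ‖b‖ n / (poch 1 n * poch x n)‖ := by
    have hx' : ∀ m : ℕ, (x : ℂ) ≠ -m := ne_neg_natCast_of_re_pos (by simpa)
    simp_rw [← Gamma_mul_gaussTerm hx', norm_mul]
    exact (summable_norm_gaussTerm hx' (by simp [x]; linarith)).mul_left _
  have hpointwise : ∀ n : ℕ,
      Tendsto (fun N : ℕ => poch a n * poch b n / (poch 1 n * poch (c + N) n)) atTop
        (𝓝 (if n = 0 then 1 else 0)) := by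
    intro n
    rcases eq_or_ne n 0 with rfl | hn
    · simp [poch_zero]
    · simpa [hn, div_eq_mul_inv, mul_inv, mul_assoc] using
        ((tendsto_inv_poch_add_natCast c hn).const_mul (poch a n * poch b n)).mul_const
          (poch 1 n)⁻¹
  have hdominated : ∀ᶠ N : ℕ in atTop, ∀ n : ℕ,
      ‖poch a n * poch b n / (poch 1 n * poch (c + N) n)‖ ≤
        ‖poch ‖a‖ n * poch ‖b‖ n / (poch 1 n * poch x n)‖ := by
    filter_upwards [eventually_ge_atTop ⌈x + ‖c‖⌉₊] with N hN n
    refine norm_poch_ratio_le a b hx (fun k => ?_) n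
    have hNk : (N : ℝ) + k ≤ ‖c + N + k‖ + ‖c‖ := calc
      (N : ℝ) + k = ‖(c + N + k) - c‖ := by
        rw [add_assoc, add_sub_cancel_left]
        exact_mod_cast (norm_natCast (N + k)).symm
      _ ≤ ‖c + N + k‖ + ‖c‖ := norm_sub_le _ _
    linarith [Nat.ceil_le.1 hN]
  have hlim := tendsto_tsum_of_dominated_convergence hbound hpointwise hdominated
  rw [tsum_ite_eq] at hlim
  refine hlim.congr fun N => ?_
  rw [← tsum_mul_left]
  exact tsum_congr fun n => (Gamma_mul_gaussTerm (add_natCast_ne_neg_natCast hc N) n).symm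

/-- Gauss's summation theorem for the regularized `₂F₁` at `1`:
`Σ_{n≥0} (a₁)_n (a₂)_n / (n! Γ(b₁+n)) = Γ(b₁-a₁-a₂)/(Γ(b₁-a₁)Γ(b₁-a₂))`,
for `Re(b₁-a₁-a₂) > 0` and `b₁` not a nonpositive integer. -/
theorem gauss_2F1_regularized (a₁ a₂ b₁ : ℂ)
    (h : 0 < (b₁ - a₁ - a₂).re) (hb : ∀ n : ℕ, b₁ ≠ -(n : ℂ)) :
    ∑' n : ℕ, poch a₁ n * poch a₂ n / ((n.factorial : ℂ) * Complex.Gamma (b₁ + (n : ℂ))) =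
      Complex.Gamma (b₁ - a₁ - a₂) /
        (Complex.Gamma (b₁ - a₁) * Complex.Gamma (b₁ - a₂)) := by
  have hΓ := Gamma_ne_zero hb
  have hre := ne_neg_natCast_of_re_pos h
  have hF : ∀ N : ℕ, ∑' n, gaussTerm a₁ a₂ b₁ n =
      poch (b₁ - a₁) N * poch (b₁ - a₂) N / (poch (b₁ - a₁ - a₂) N * poch b₁ N) *
        (Gamma (b₁ + N) * ∑' n, gaussTerm a₁ a₂ (b₁ + N) n) / Gamma b₁ := fun N => by
    have := poch_ne_zero hre N
    have := poch_ne_zero hb N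
    rw [Gamma_add_nat hb]
    field_simp
    linear_combination poch_mul_tsum_gaussTerm hb h N
  have hlim := ((tendsto_poch_ratio_of_add_eq (x := b₁ - a₁) (y := b₁ - a₂) (by ring) hre hb).mul
    (tendsto_Gamma_mul_tsum_gaussTerm_add_natCast a₁ a₂ hb)).div_const (Gamma b₁)
  change ∑' n, gaussTerm a₁ a₂ b₁ n = _
  rw [tendsto_nhds_unique (tendsto_const_nhds.congr hF) hlim]
  field_simp
end

section
/- Three-term general relation for ₄F₃ at a general argument z: with f(z) = ₄F₃(a₁,a₂,a₃,a₄; b₁+1, b₂+1, b₃; z) and T_a = 1 + (1/a) z d/dz, assume a₁ = -m terminates all series (m ∈ ℕ₀), and all lower parameters avoid nonpositive integers. Then 0 = b₁b₂(a₃a₄(b₂-a₂) + b₁(a₃(a₂-a₄) + a₂(a₄-b₂)) + a₁(a₃a₄ + (a₂-a₃-a₄)b₂ + b₁(b₂-a₂)))·₄F₃(a₁,a₂,a₃,a₄;b₁,b₂,b₃;z) + a₃a₄(a₁-b₁)(a₂-b₂)(b₁-b₂)·₄F₃(a₁,a₂,a₃+1,a₄+1;b₁+1,b₂+1,b₃;z)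 - a₂b₁(b₁-a₁)(a₃-b₂)(b₂-a₄)·₄F₃(a₁,a₂+1,a₃,a₄;b₁,b₂+1,b₃;z) - a₁b₂(a₃-b₁)(b₁-a₄)(a₂-b₂)·₄F₃(a₁+1,a₂,a₃,a₄;b₁+1,b₂,b₃;z). -/
/-- The hypergeometric series `₄F₃(a₁,a₂,a₃,a₄;b₁,b₂,b₃;z)`. -/
noncomputable def F43 (a₁ a₂ a₃ a₄ b₁ b₂ b₃ z : ℂ) : ℂ :=
  ∑' n : ℕ, poch a₁ n * poch a₂ n * poch a₃ n * poch a₄ n * z ^ n /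
    ((n.factorial : ℂ) * poch b₁ n * poch b₂ n * poch b₃ n)

open Finset

lemma mul_poch_add_one (a : ℂ) (n : ℕ) : a * poch (a + 1) n = poch a n * (a + n) := by
  have h₁ : poch a (n + 1) = poch a n * (a + n) := prod_range_succ _ _
  have h₂ : poch a (n + 1) = a * poch (a + 1) n := by
    rw [poch, prod_range_succ', mul_comm]
    simp only [poch, Nat.cast_succ, Nat.cast_zero, add_zero, add_assoc, add_comm (1 : ℂ)]
  rw [← h₂, h₁]

lemma poch_add_one {b : ℂ} (hb : b ≠ 0) (n : ℕ) : poch (b + 1) n = poch b n * (b + n) / b := by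
  rw [← mul_poch_add_one, mul_div_cancel_left₀ _ hb]

section NotNonposInt

variable {b : ℂ} (hb : ∀ k : ℕ, b ≠ -(k : ℂ))
include hb

lemma add_natCast_ne_zero_s17 (n : ℕ) : b + n ≠ 0 := fun h => hb n (eq_neg_of_add_eq_zero_left h)

lemma ne_zero_of_ne_neg_natCast : b ≠ 0 := by simpa using add_natCast_ne_zero_s17 hb 0

lemma poch_ne_zero_s17 (n : ℕ) : poch b n ≠ 0 :=
  prod_ne_zero_iff.2 fun k _ => add_natCast_ne_zero_s17 hb k

end NotNonposInt

lemma poch_neg_natCast_eq_zero {m n : ℕ} (h : m < n) : poch (-(m : ℂ)) n = 0 :=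
  prod_eq_zero (mem_range.2 h) (neg_add_cancel _)

noncomputable def F43term (a₁ a₂ a₃ a₄ b₁ b₂ b₃ z : ℂ) (n : ℕ) : ℂ :=
  poch a₁ n * poch a₂ n * poch a₃ n * poch a₄ n * z ^ n /
    ((n.factorial : ℂ) * poch b₁ n * poch b₂ n * poch b₃ n)

lemma F43_eq_tsum_F43term (a₁ a₂ a₃ a₄ b₁ b₂ b₃ z : ℂ) :
    F43 a₁ a₂ a₃ a₄ b₁ b₂ b₃ z = ∑' n, F43term a₁ a₂ a₃ a₄ b₁ b₂ b₃ z n := rfl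

lemma F43term_neg_natCast_eq_zero {m n : ℕ} (h : m < n) (a₂ a₃ a₄ b₁ b₂ b₃ z : ℂ) :
    F43term (-(m : ℂ)) a₂ a₃ a₄ b₁ b₂ b₃ z n = 0 := by
  simp [F43term, poch_neg_natCast_eq_zero h]

section Contiguous

variable {a₁ a₂ a₃ a₄ b₁ b₂ : ℂ} (b₃ z : ℂ) (n : ℕ)

lemma mul_F43term_add_one_a₃_a₄ (hb₁ : ∀ k : ℕ, b₁ ≠ -(k : ℂ)) (hb₂ : ∀ k : ℕ, b₂ ≠ -(k : ℂ)) :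
    a₃ * a₄ * F43term a₁ a₂ (a₃ + 1) (a₄ + 1) (b₁ + 1) (b₂ + 1) b₃ z n =
      F43term a₁ a₂ a₃ a₄ b₁ b₂ b₃ z n *
        (b₁ * b₂ * (a₃ + n) * (a₄ + n) / ((b₁ + n) * (b₂ + n))) := by
  have := poch_ne_zero_s17 hb₁ n
  have := poch_ne_zero_s17 hb₂ n
  have := add_natCast_ne_zero_s17 hb₁ n
  have := add_natCast_ne_zero_s17 hb₂ n
  rw [F43term, F43term, poch_add_one (ne_zero_of_ne_neg_natCast hb₁),
    poch_add_one (ne_zero_of_ne_neg_natCast hb₂)]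
  field_simp
  linear_combination poch a₁ n * poch a₂ n * z ^ n * b₁ * b₂ / (n.factorial * poch b₃ n) *
    (a₄ * poch (a₄ + 1) n * mul_poch_add_one a₃ n + poch a₃ n * (a₃ + n) * mul_poch_add_one a₄ n)

lemma mul_F43term_add_one_a₂ (hb₂ : ∀ k : ℕ, b₂ ≠ -(k : ℂ)) :
    a₂ * F43term a₁ (a₂ + 1) a₃ a₄ b₁ (b₂ + 1) b₃ z n =
      F43term a₁ a₂ a₃ a₄ b₁ b₂ b₃ z n * (b₂ * (a₂ + n) / (b₂ + n)) := by
  have := poch_ne_zero_s17 hb₂ n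
  have := add_natCast_ne_zero_s17 hb₂ n
  rw [F43term, F43term, poch_add_one (ne_zero_of_ne_neg_natCast hb₂)]
  field_simp
  linear_combination poch a₁ n * poch a₃ n * poch a₄ n * z ^ n * b₂ /
      (n.factorial * poch b₁ n * poch b₃ n) * mul_poch_add_one a₂ n

lemma mul_F43term_add_one_a₁ (hb₁ : ∀ k : ℕ, b₁ ≠ -(k : ℂ)) :
    a₁ * F43term (a₁ + 1) a₂ a₃ a₄ (b₁ + 1) b₂ b₃ z n =
      F43term a₁ a₂ a₃ a₄ b₁ b₂ b₃ z n * (b₁ * (a₁ + n) / (b₁ + n)) := by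
  have := poch_ne_zero_s17 hb₁ n
  have := add_natCast_ne_zero_s17 hb₁ n
  rw [F43term, F43term, poch_add_one (ne_zero_of_ne_neg_natCast hb₁)]
  field_simp
  linear_combination poch a₂ n * poch a₃ n * poch a₄ n * z ^ n * b₁ /
      (n.factorial * poch b₂ n * poch b₃ n) * mul_poch_add_one a₁ n

end Contiguous

/-- `F₂, F₃, F₄` stand for the three shifted series already multiplied by `a₃ a₄`, `a₂`, `a₁`:
only `a₁ ₄F₃(a₁+1, …)`, not `₄F₃(a₁+1, …)` itself, terminates when `a₁ = 0`. -/
def relationCombination (a₁ a₂ a₃ a₄ b₁ b₂ F₁ F₂ F₃ F₄ : ℂ) : ℂ :=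
  b₁ * b₂ * (a₃ * a₄ * (b₂ - a₂) + b₁ * (a₃ * (a₂ - a₄) + a₂ * (a₄ - b₂))
      + a₁ * (a₃ * a₄ + (a₂ - a₃ - a₄) * b₂ + b₁ * (b₂ - a₂))) * F₁
    + (a₁ - b₁) * (a₂ - b₂) * (b₁ - b₂) * F₂
    - b₁ * (b₁ - a₁) * (a₃ - b₂) * (b₂ - a₄) * F₃
    - b₂ * (a₃ - b₁) * (b₁ - a₄) * (a₂ - b₂) * F₄

section relationCombination

variable (a₁ a₂ a₃ a₄ b₁ b₂ : ℂ)

lemma relationCombination_sum (s : Finset ℕ) (f₁ f₂ f₃ f₄ : ℕ → ℂ) :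
    relationCombination a₁ a₂ a₃ a₄ b₁ b₂ (∑ n ∈ s, f₁ n) (∑ n ∈ s, f₂ n) (∑ n ∈ s, f₃ n)
        (∑ n ∈ s, f₄ n) =
      ∑ n ∈ s, relationCombination a₁ a₂ a₃ a₄ b₁ b₂ (f₁ n) (f₂ n) (f₃ n) (f₄ n) := by
  simp only [relationCombination, mul_sum, ← sum_add_distrib, ← sum_sub_distrib]

lemma relationCombination_ratios_eq_zero {x : ℂ} (hb₁ : b₁ + x ≠ 0) (hb₂ : b₂ + x ≠ 0) :
    relationCombination a₁ a₂ a₃ a₄ b₁ b₂ 1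
      (b₁ * b₂ * (a₃ + x) * (a₄ + x) / ((b₁ + x) * (b₂ + x)))
      (b₂ * (a₂ + x) / (b₂ + x)) (b₁ * (a₁ + x) / (b₁ + x)) = 0 := by
  rw [relationCombination]
  field_simp
  ring

end relationCombination

lemma relationCombination_F43term_eq_zero {a₁ a₂ a₃ a₄ b₁ b₂ : ℂ} (b₃ z : ℂ)
    (hb₁ : ∀ k : ℕ, b₁ ≠ -(k : ℂ)) (hb₂ : ∀ k : ℕ, b₂ ≠ -(k : ℂ)) (n : ℕ) :
    relationCombination a₁ a₂ a₃ a₄ b₁ b₂ (F43term a₁ a₂ a₃ a₄ b₁ b₂ b₃ z n)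
      (a₃ * a₄ * F43term a₁ a₂ (a₃ + 1) (a₄ + 1) (b₁ + 1) (b₂ + 1) b₃ z n)
      (a₂ * F43term a₁ (a₂ + 1) a₃ a₄ b₁ (b₂ + 1) b₃ z n)
      (a₁ * F43term (a₁ + 1) a₂ a₃ a₄ (b₁ + 1) b₂ b₃ z n) = 0 := by
  have h := relationCombination_ratios_eq_zero a₁ a₂ a₃ a₄ b₁ b₂
    (add_natCast_ne_zero_s17 hb₁ n) (add_natCast_ne_zero_s17 hb₂ n)
  rw [mul_F43term_add_one_a₃_a₄ b₃ z n hb₁ hb₂, mul_F43term_add_one_a₂ b₃ z n hb₂,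
    mul_F43term_add_one_a₁ b₃ z n hb₁]
  rw [relationCombination] at h ⊢
  linear_combination F43term a₁ a₂ a₃ a₄ b₁ b₂ b₃ z n * h

theorem F43_general_relation_general (m : ℕ) (a₁ a₂ a₃ a₄ b₁ b₂ b₃ z : ℂ) (ha₁ : a₁ = -(m : ℂ))
    (hb₁ : ∀ n : ℕ, b₁ ≠ -(n : ℂ)) (hb₂ : ∀ n : ℕ, b₂ ≠ -(n : ℂ)) :
    0 = b₁ * b₂ * (a₃ * a₄ * (b₂ - a₂) + b₁ * (a₃ * (a₂ - a₄) + a₂ * (a₄ - b₂))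
          + a₁ * (a₃ * a₄ + (a₂ - a₃ - a₄) * b₂ + b₁ * (b₂ - a₂))) *
        F43 a₁ a₂ a₃ a₄ b₁ b₂ b₃ z
      + a₃ * a₄ * (a₁ - b₁) * (a₂ - b₂) * (b₁ - b₂) *
        F43 a₁ a₂ (a₃ + 1) (a₄ + 1) (b₁ + 1) (b₂ + 1) b₃ z
      - a₂ * b₁ * (b₁ - a₁) * (a₃ - b₂) * (b₂ - a₄) *
        F43 a₁ (a₂ + 1) a₃ a₄ b₁ (b₂ + 1) b₃ z
      - a₁ * b₂ * (a₃ - b₁) * (b₁ - a₄) * (a₂ - b₂) *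
        F43 (a₁ + 1) a₂ a₃ a₄ (b₁ + 1) b₂ b₃ z := by
  have ht : ∀ n ∉ range (m + 1), F43term a₁ a₂ a₃ a₄ b₁ b₂ b₃ z n = 0 := fun n hn =>
    ha₁ ▸ F43term_neg_natCast_eq_zero (by simpa using hn) _ _ _ _ _ _ _
  have h₁ : F43 a₁ a₂ a₃ a₄ b₁ b₂ b₃ z = ∑ n ∈ range (m + 1), F43term a₁ a₂ a₃ a₄ b₁ b₂ b₃ z n :=
    tsum_eq_sum ht
  have h₂ : a₃ * a₄ * F43 a₁ a₂ (a₃ + 1) (a₄ + 1) (b₁ + 1) (b₂ + 1) b₃ z =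
      ∑ n ∈ range (m + 1), a₃ * a₄ * F43term a₁ a₂ (a₃ + 1) (a₄ + 1) (b₁ + 1) (b₂ + 1) b₃ z n := by
    rw [F43_eq_tsum_F43term, ← tsum_mul_left]
    exact tsum_eq_sum fun n hn => by rw [mul_F43term_add_one_a₃_a₄ b₃ z n hb₁ hb₂, ht n hn, zero_mul]
  have h₃ : a₂ * F43 a₁ (a₂ + 1) a₃ a₄ b₁ (b₂ + 1) b₃ z =
      ∑ n ∈ range (m + 1), a₂ * F43term a₁ (a₂ + 1) a₃ a₄ b₁ (b₂ + 1) b₃ z n := by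
    rw [F43_eq_tsum_F43term, ← tsum_mul_left]
    exact tsum_eq_sum fun n hn => by rw [mul_F43term_add_one_a₂ b₃ z n hb₂, ht n hn, zero_mul]
  have h₄ : a₁ * F43 (a₁ + 1) a₂ a₃ a₄ (b₁ + 1) b₂ b₃ z =
      ∑ n ∈ range (m + 1), a₁ * F43term (a₁ + 1) a₂ a₃ a₄ (b₁ + 1) b₂ b₃ z n := by
    rw [F43_eq_tsum_F43term, ← tsum_mul_left]
    exact tsum_eq_sum fun n hn => by rw [mul_F43term_add_one_a₁ b₃ z n hb₁, ht n hn, zero_mul]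
  have hsum := sum_eq_zero fun n (_ : n ∈ range (m + 1)) =>
    relationCombination_F43term_eq_zero (a₁ := a₁) (a₂ := a₂) (a₃ := a₃) (a₄ := a₄) b₃ z hb₁ hb₂ n
  rw [← relationCombination_sum, ← h₁, ← h₂, ← h₃, ← h₄, relationCombination] at hsum
  linear_combination -hsum

/-- Three-term (four-series) general relation for terminating `₄F₃` at a general
argument `z`. -/
theorem F43_general_relation (m : ℕ) (a₁ a₂ a₃ a₄ b₁ b₂ b₃ z : ℂ) (ha₁ : a₁ = -(m : ℂ))
    (hb₁ : ∀ n : ℕ, b₁ ≠ -(n : ℂ)) (hb₂ : ∀ n : ℕ, b₂ ≠ -(n : ℂ))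
    (hb₃ : ∀ n : ℕ, b₃ ≠ -(n : ℂ)) :
    0 = b₁ * b₂ * (a₃ * a₄ * (b₂ - a₂) + b₁ * (a₃ * (a₂ - a₄) + a₂ * (a₄ - b₂))
          + a₁ * (a₃ * a₄ + (a₂ - a₃ - a₄) * b₂ + b₁ * (b₂ - a₂))) *
        F43 a₁ a₂ a₃ a₄ b₁ b₂ b₃ z
      + a₃ * a₄ * (a₁ - b₁) * (a₂ - b₂) * (b₁ - b₂) *
        F43 a₁ a₂ (a₃ + 1) (a₄ + 1) (b₁ + 1) (b₂ + 1) b₃ z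
      - a₂ * b₁ * (b₁ - a₁) * (a₃ - b₂) * (b₂ - a₄) *
        F43 a₁ (a₂ + 1) a₃ a₄ b₁ (b₂ + 1) b₃ z
      - a₁ * b₂ * (a₃ - b₁) * (b₁ - a₄) * (a₂ - b₂) *
        F43 (a₁ + 1) a₂ a₃ a₄ (b₁ + 1) b₂ b₃ z :=
  F43_general_relation_general m a₁ a₂ a₃ a₄ b₁ b₂ b₃ z ha₁ hb₁ hb₂
end
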